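/- arXiv:1502.06693 — 2 statements merged into one kernel-verified Lean document; each statement's English description precedes it below -/
import Mathlib

section
/- For any index 𝐤 = (k_1,…,k_r) with r ≥ 1, the evaluation of the finite multiple polylogarithm at T = 1 vanishes: li_𝐤(1) = 0 in 𝒜; that is, for all sufficiently large primes p, Σ′_{0<l_1,…,l_r<p} 1/(l_1^{k_1}(l_1+l_2)^{k_2}⋯(l_1+⋯+l_r)^{k_r}) ≡ 0 (mod p), where Σ′ restricts to terms whose denominators are prime to p. -/
open scoped BigOperators

set_option synthInstance.maxHeartbeats 400000

namespace FMP

/-- The type of prime numbers. -/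
abbrev PP := Nat.Primes

instance (p : PP) : Fact (Nat.Prime (p : ℕ)) := ⟨p.2⟩

/-- The ideal of families vanishing at all but finitely many primes. -/
def cofinIdeal (R : PP → Type) [∀ p, CommRing (R p)] : Ideal (∀ p, R p) where
  carrier := {f | ∀ᶠ p in Filter.cofinite, f p = 0}
  add_mem' := by
    intro f g hf hg
    show ∀ᶠ p in Filter.cofinite, (f + g) p = 0
    simp only [Set.mem_setOf_eq] at hf hg
    filter_upwards [hf, hg] with p h1 h2
    simp [h1, h2]
  zero_mem' := by
    show ∀ᶠ p in Filter.cofinite, (0 : ∀ p, R p) p = 0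
    exact Filter.Eventually.of_forall fun p => rfl
  smul_mem' := by
    intro c f hf
    show ∀ᶠ p in Filter.cofinite, (c • f) p = 0
    simp only [Set.mem_setOf_eq] at hf
    filter_upwards [hf] with p h
    simp [h]

lemma mem_cofinIdeal {R : PP → Type} [∀ p, CommRing (R p)] (f : ∀ p, R p) :
    f ∈ cofinIdeal R ↔ ∀ᶠ p in Filter.cofinite, f p = 0 := Iff.rfl

/-- The ring 𝒜 = (∏ₚ 𝔽ₚ)/(⊕ₚ 𝔽ₚ). -/
abbrev A : Type := (∀ p : PP, ZMod p) ⧸ cofinIdeal fun p => ZMod p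

/-- The ring ℬ = (∏ₚ 𝔽ₚ[T])/(⊕ₚ 𝔽ₚ[T]). -/
abbrev B : Type := (∀ p : PP, Polynomial (ZMod p)) ⧸ cofinIdeal fun p => Polynomial (ZMod p)

noncomputable def Amk : (∀ p : PP, ZMod p) →+* A := Ideal.Quotient.mk _
noncomputable def Bmk : (∀ p : PP, Polynomial (ZMod p)) →+* B := Ideal.Quotient.mk _

/-- The componentwise action of 𝒜 on ℬ, as a ring homomorphism 𝒜 →+* ℬ. -/
noncomputable def AtoB : A →+* B :=
  Ideal.Quotient.lift _
    (Bmk.comp (Pi.ringHom fun p => Polynomial.C.comp (Pi.evalRingHom (fun q : PP => ZMod (q : ℕ)) p)))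
    (fun f hf => by
      rw [RingHom.comp_apply]
      rw [show Bmk = Ideal.Quotient.mk (cofinIdeal fun p => Polynomial (ZMod p)) from rfl]
      rw [Ideal.Quotient.eq_zero_iff_mem, mem_cofinIdeal]
      rw [mem_cofinIdeal] at hf
      filter_upwards [hf] with p h
      exact (congrArg Polynomial.C h).trans (map_zero _))

/-- Partial sums: `psum l i = l 0 + ... + l i`. -/
def psum {r : ℕ} (l : Fin r → ℕ) (i : Fin r) : ℕ := ∑ j ∈ Finset.Iic i, l j

/-- The finset of tuples `(l 0, ..., l (r-1))` with `0 < l i < p`. -/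
def pf (r p : ℕ) : Finset (Fin r → ℕ) := Fintype.piFinset fun _ => Finset.Ioo 0 p

/-- The denominator `L_1^{k_1} ⋯ L_r^{k_r}` of a term, as an element of 𝔽ₚ.
(Its inverse is `0` whenever some partial sum is divisible by `p`, so taking inverses
of these denominators automatically implements the restricted sums `Σ'`.) -/
def den (p : PP) (k : List ℕ) (l : Fin k.length → ℕ) : ZMod (p : ℕ) :=
  ∏ i, ((psum l i : ℕ) : ZMod (p : ℕ)) ^ k.get i

/-- The weight of an index. -/
def wt (k : List ℕ) : ℕ := k.sum

/-- The finite multiple zeta value ζ_𝒜(k). -/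
noncomputable def zetaA (k : List ℕ) : A :=
  Amk fun p => ∑ l ∈ (pf k.length (p : ℕ)).filter (fun l => ∑ i, l i < (p : ℕ)), (den p k l)⁻¹

/-- The variant ζ^{(i)}_𝒜(k) of finite multiple zeta values. -/
noncomputable def zetaAi (i : ℕ) (k : List ℕ) : A :=
  Amk fun p => ∑ l ∈ (pf k.length (p : ℕ)).filter
      (fun l => (i - 1) * (p : ℕ) < ∑ j, l j ∧ ∑ j, l j < i * (p : ℕ)), (den p k l)⁻¹

/-- The finite multiple polylogarithm li_k(T) ∈ ℬ. -/
noncomputable def liT (k : List ℕ) : B :=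
  Bmk fun p => ∑ l ∈ pf k.length (p : ℕ),
    Polynomial.C ((den p k l)⁻¹) * Polynomial.X ^ (∑ i, l i)

/-- The element T^p of ℬ. -/
noncomputable def Tp : B := Bmk fun p => Polynomial.X ^ (p : ℕ)

/-- The finite multiple polylogarithm li(λ, μ, ν; T) of type (λ, μ, ν). -/
noncomputable def liType (lam mu nu : List ℕ) : B :=
  Bmk fun p =>
    ∑ l ∈ pf lam.length (p : ℕ), ∑ m ∈ pf mu.length (p : ℕ), ∑ n ∈ pf nu.length (p : ℕ),
      Polynomial.C ((den p lam l * den p mu m *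
          ∏ z, ((((∑ i, l i) + (∑ j, m j) + psum n z : ℕ)) : ZMod (p : ℕ)) ^ nu.get z)⁻¹) *
        Polynomial.X ^ ((∑ i, l i) + (∑ j, m j) + (∑ z, n z))


/-! Write `Lᵢ = l₁ + ⋯ + lᵢ` and, for `b ∈ 𝔽ₚ`, `H_𝐤(b) = Σ_{l ∈ (0,p)^r} ∏ᵢ (b + Lᵢ)^{-kᵢ}`,
so that the `p`-component of `li_𝐤(1)` is `H_𝐤(0)`. Splitting off `l₁` and substituting
`c = b + l₁`, which runs over `𝔽ₚ ∖ {b}`, gives `H_{(k₁,𝐤')}(b) = S - b^{-k₁} H_{𝐤'}(b)` with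
`S = Σ_{c ∈ 𝔽ₚ} c^{-k₁} H_{𝐤'}(c)` independent of `b`. By induction, `H_𝐤(b) = Q_𝐤(b⁻¹)` for a
polynomial `Q_𝐤` of degree at most the weight `w` of `𝐤`. If `k₁ > 0`, then
`H_𝐤(0) = Σ_c P(c⁻¹) = Σ_c P(c)` with `P = X^{k₁} Q_{𝐤'}` of degree `≤ w`, and this vanishes for
`p ≥ w + 2` because the power sums `Σ_c c^i` vanish in `𝔽ₚ` for `i < p - 1`. -/

lemma psum_zero {n : ℕ} (l : Fin (n + 1) → ℕ) : psum l 0 = l 0 := by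
  rw [psum, ← bot_eq_zero, Finset.Iic_bot, Finset.sum_singleton]

lemma psum_cons_succ {n : ℕ} (x : ℕ) (l : Fin n → ℕ) (i : Fin n) :
    psum (Fin.cons x l) i.succ = x + psum l i := by
  have : Finset.Iic i.succ = insert 0 ((Finset.Iic i).map (Fin.succEmb n)) := by
    rw [Fin.map_succEmb_Iic, Finset.Ioc_insert_left (Fin.zero_le _)]
    rfl
  rw [psum, psum, this, Finset.sum_insert (by simp), Finset.sum_map]
  simp

lemma sum_piFinset_const_succ {α M : Type*} [DecidableEq α] [AddCommMonoid M] {n : ℕ}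
    (s : Finset α) (F : (Fin (n + 1) → α) → M) :
    ∑ l ∈ Fintype.piFinset (fun _ => s), F l =
      ∑ x ∈ s, ∑ l ∈ Fintype.piFinset (fun _ => s), F (Fin.cons x l) := by
  rw [← Finset.sum_product']
  refine Finset.sum_nbij' (fun l => (l 0, Fin.tail l)) (fun q => Fin.cons q.1 q.2)
    ?_ ?_ ?_ ?_ ?_ <;> intro l hl
  · exact Finset.mem_product.2 (Fin.mem_piFinset_iff_zero_tail.1 hl)
  · exact Fin.mem_piFinset_iff_zero_tail.2 (Finset.mem_product.1 hl)
  · exact Fin.cons_self_tail l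
  · simp
  · simp

section PrimeField

variable {p : ℕ} [Fact p.Prime]

lemma sum_Ioo_add_natCast {M : Type*} [AddCommMonoid M] (f : ZMod p → M) (b : ZMod p) :
    ∑ x ∈ Finset.Ioo 0 p, f (b + x) = ∑ c ∈ Finset.univ.erase b, f c := by
  refine Finset.sum_nbij' (fun x => b + x) (fun c => (c - b).val) ?_ ?_ ?_ ?_ fun _ _ => rfl
  · intro x hx
    rw [Finset.mem_Ioo] at hx
    simp [ZMod.natCast_eq_zero_iff, Nat.not_dvd_of_pos_of_lt hx.1 hx.2]
  · intro c hc
    rw [Finset.mem_erase] at hc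
    simp [Nat.pos_iff_ne_zero, ZMod.val_lt, sub_eq_zero, hc.1]
  · intro x hx
    rw [Finset.mem_Ioo] at hx
    simp [ZMod.val_cast_of_lt hx.2]
  · intro c _
    simp

lemma sum_eval_eq_zero_of_natDegree_lt (Q : Polynomial (ZMod p)) (hQ : Q.natDegree < p - 1) :
    ∑ x : ZMod p, Q.eval x = 0 := by
  simp_rw [Q.eval_eq_sum_range, Finset.sum_comm (γ := ZMod p), ← Finset.mul_sum]
  refine Finset.sum_eq_zero fun i hi => ?_
  rw [FiniteField.sum_pow_lt_card_sub_one, mul_zero]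
  rw [ZMod.card]
  rw [Finset.mem_range] at hi
  omega

variable (p) in
def shiftedSum (k : List ℕ) (b : ZMod p) : ZMod p :=
  ∑ l ∈ pf k.length p, ∏ i, (b + psum l i)⁻¹ ^ k.get i

@[simp]
lemma shiftedSum_nil (b : ZMod p) : shiftedSum p [] b = 1 := by
  simp [shiftedSum, pf]

lemma shiftedSum_cons (k₀ : ℕ) (k : List ℕ) (b : ZMod p) :
    shiftedSum p (k₀ :: k) b = ∑ c ∈ Finset.univ.erase b, c⁻¹ ^ k₀ * shiftedSum p k c := by
  rw [← sum_Ioo_add_natCast, shiftedSum, pf]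
  refine (sum_piFinset_const_succ _ _).trans ?_
  refine Finset.sum_congr rfl fun x _ => ?_
  rw [shiftedSum, Finset.mul_sum]
  refine Finset.sum_congr rfl fun l _ => ?_
  refine (Fin.prod_univ_succ (n := k.length) _).trans ?_
  simp only [psum_zero, psum_cons_succ, Fin.cons_zero, List.get_cons_zero, Nat.cast_add, add_assoc]
  rfl

lemma exists_natDegree_le_shiftedSum_eq_eval (k : List ℕ) :
    ∃ Q : Polynomial (ZMod p), Q.natDegree ≤ k.sum ∧ ∀ b, shiftedSum p k b = Q.eval b⁻¹ := by
  induction k with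
  | nil => exact ⟨1, by simp⟩
  | cons k₀ k ih =>
    obtain ⟨Q, hQdeg, hQ⟩ := ih
    set P : Polynomial (ZMod p) := Polynomial.X ^ k₀ * Q
    have hPdeg : P.natDegree ≤ (k₀ :: k).sum :=
      Polynomial.natDegree_mul_le.trans (by simpa using hQdeg)
    refine ⟨Polynomial.C (∑ c, P.eval c⁻¹) - P, ?_, fun b => ?_⟩
    · refine (Polynomial.natDegree_sub_le _ _).trans (max_le ?_ hPdeg)
      rw [Polynomial.natDegree_C]
      exact Nat.zero_le _
    · rw [shiftedSum_cons, Finset.sum_erase_eq_sub (Finset.mem_univ b), Polynomial.eval_sub,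
        Polynomial.eval_C]
      simp only [hQ, P, Polynomial.eval_mul, Polynomial.eval_pow, Polynomial.eval_X]

lemma shiftedSum_cons_zero {k₀ : ℕ} {k : List ℕ} (hk₀ : 0 < k₀) (hp : (k₀ :: k).sum + 2 ≤ p) :
    shiftedSum p (k₀ :: k) 0 = 0 := by
  obtain ⟨Q, hQdeg, hQ⟩ := exists_natDegree_le_shiftedSum_eq_eval (p := p) k
  set P : Polynomial (ZMod p) := Polynomial.X ^ k₀ * Q
  have hPdeg : P.natDegree < p - 1 := by
    refine Polynomial.natDegree_mul_le.trans_lt ?_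
    rw [Polynomial.natDegree_X_pow]
    rw [List.sum_cons] at hp
    omega
  calc shiftedSum p (k₀ :: k) 0 = ∑ c ∈ Finset.univ.erase 0, P.eval c⁻¹ := by
        simp [shiftedSum_cons, hQ, P]
    _ = ∑ c, P.eval c⁻¹ := Finset.sum_erase _ (by simp [P, hk₀.ne'])
    _ = ∑ c, P.eval c := Equiv.sum_comp (Equiv.inv (ZMod p)) (fun c => P.eval c)
    _ = 0 := sum_eval_eq_zero_of_natDegree_lt P hPdeg

end PrimeField

/-- li_𝐤(1) = 0 in 𝒜: for all but finitely many primes p, the restricted sum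
Σ'_{0<l_1,…,l_r<p} 1/(l_1^{k_1}(l_1+l_2)^{k_2}⋯(l_1+⋯+l_r)^{k_r}) vanishes mod p.
(The inverse of `den` is 0 whenever a partial sum is divisible by p, which implements Σ'.) -/
theorem li_at_one_eq_zero (k : List ℕ) (hk : ∀ i ∈ k, 0 < i) (hr : 0 < k.length) :
    Amk (fun p => ∑ l ∈ pf k.length (p : ℕ), (den p k l)⁻¹) = 0 := by
  obtain ⟨k₀, k', rfl⟩ := List.exists_cons_of_length_pos hr
  have hlarge : ∀ᶠ q : PP in Filter.cofinite, (k₀ :: k').sum + 2 ≤ (q : ℕ) :=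
    (Nat.cofinite_eq_atTop ▸ Subtype.coe_injective.tendsto_cofinite).eventually_ge_atTop _
  rw [Amk, Ideal.Quotient.eq_zero_iff_mem, mem_cofinIdeal]
  filter_upwards [hlarge] with q hq
  calc ∑ l ∈ pf (k₀ :: k').length q, (den q (k₀ :: k') l)⁻¹ = shiftedSum q (k₀ :: k') 0 := by
        simp only [den, shiftedSum, zero_add, inv_pow, Finset.prod_inv_distrib]
    _ = 0 := shiftedSum_cons_zero (hk k₀ List.mem_cons_self) hq

end FMP
end

section
/- For all positive integers k_1, k_2, k_3: ζ^{(2)}_𝒜(k_1, k_2, k_3) = ζ_𝒜(k_3, k_1, k_2) + ζ_𝒜(k_1, k_3, k_2) + ζ_𝒜(k_2, k_3, k_1) + ζ_𝒜(k_2, k_1, k_3) + ζ_𝒜(k_1+k_3, k_2) + ζ_𝒜(k_2, k_1+k_3) in 𝒜. -/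
open scoped BigOperators

set_option synthInstance.maxHeartbeats 400000

namespace FMP

/-! In partial-sum coordinates `a = l₁ < b = l₁ + l₂ < c = l₁ + l₂ + l₃`, the terms of
`ζ^{(2)}_𝒜(k₁, k₂, k₃)` are those with `p < c < 2p`. Reducing `b` and `c` modulo `p` maps them
bijectively onto the triples `(a, β, γ)` of residues in `(0, p)` for which `β` lies strictly above
both `a` and `γ` (when `b < p`) or strictly below both (when `b > p`); the terms with `b = p`
vanish because `k₂ > 0`. Splitting each of these two regions according to the order of `a` and `γ`
gives six regions, and each one is the index set of one of the six finite multiple zeta values on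
the right-hand side. -/

open Finset

theorem sum_eq_sum_lt_add_sum_eq_add_sum_gt {ι α M : Type*} [LinearOrder α] [AddCommMonoid M]
    (s : Finset ι) (f : ι → M) (u w : ι → α) :
    ∑ i ∈ s, f i = ∑ i ∈ s.filter (fun i => u i < w i), f i
      + ∑ i ∈ s.filter (fun i => u i = w i), f i + ∑ i ∈ s.filter (fun i => w i < u i), f i := by
  have h_eq : s.filter (fun i => u i = w i)
      = (s.filter fun i => ¬ u i < w i).filter fun i => u i = w i := by
    rw [filter_filter]
    exact filter_congr fun i _ => ⟨fun h => ⟨h.not_lt, h⟩, And.right⟩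
  have h_gt : s.filter (fun i => w i < u i)
      = (s.filter fun i => ¬ u i < w i).filter fun i => ¬ u i = w i := by
    rw [filter_filter]
    exact filter_congr fun i _ => ⟨fun h => ⟨not_lt_of_gt h, ne_of_gt h⟩,
      fun h => lt_of_le_of_ne (not_lt.1 h.1) (Ne.symm h.2)⟩
  rw [h_eq, h_gt, add_assoc, sum_filter_add_sum_filter_not, sum_filter_add_sum_filter_not]

theorem natCast_sub_modulus {m n : ℕ} (h : n ≤ m) : ((m - n : ℕ) : ZMod n) = m := by
  rw [Nat.cast_sub h, ZMod.natCast_self, sub_zero]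

section Reindexing

variable (n x y z : ℕ)

def invMonomial (v : ℕ × ℕ × ℕ) : ZMod n :=
  ((v.1 : ZMod n) ^ x * (v.2.1 : ZMod n) ^ y * (v.2.2 : ZMod n) ^ z)⁻¹

def cube : Finset (ℕ × ℕ × ℕ) := Ioo 0 n ×ˢ Ioo 0 n ×ˢ Ioo 0 n

def simplex : Finset (ℕ × ℕ × ℕ) := (cube n).filter fun v => v.1 < v.2.1 ∧ v.2.1 < v.2.2

def simplex2 : Finset (ℕ × ℕ) := (Ioo 0 n ×ˢ Ioo 0 n).filter fun v => v.1 < v.2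

def cubeMidMax : Finset (ℕ × ℕ × ℕ) := (cube n).filter fun v => v.1 < v.2.1 ∧ v.2.2 < v.2.1

def cubeMidMin : Finset (ℕ × ℕ × ℕ) := (cube n).filter fun v => v.2.1 < v.1 ∧ v.2.1 < v.2.2

theorem sum_cubeMidMax :
    ∑ v ∈ cubeMidMax n, invMonomial n x y z v
      = ∑ v ∈ simplex n, invMonomial n x z y v
        + ∑ v ∈ simplex2 n, ((v.1 : ZMod n) ^ (x + z) * (v.2 : ZMod n) ^ y)⁻¹
        + ∑ v ∈ simplex n, invMonomial n z x y v := by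
  rw [sum_eq_sum_lt_add_sum_eq_add_sum_gt _ _ Prod.fst (fun v => v.2.2)]
  have lt : ∑ v ∈ (cubeMidMax n).filter (fun v => v.1 < v.2.2), invMonomial n x y z v
      = ∑ v ∈ simplex n, invMonomial n x z y v := by
    refine sum_nbij' (fun v => (v.1, v.2.2, v.2.1)) (fun v => (v.1, v.2.2, v.2.1)) ?_ ?_
      (fun _ _ => rfl) (fun _ _ => rfl) fun v _ => by dsimp only [invMonomial]; congr 1; ring
    all_goals
      intro v hv
      simp only [cubeMidMax, simplex, cube, mem_filter, mem_product, mem_Ioo] at hv ⊢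
      omega
  have eq : ∑ v ∈ (cubeMidMax n).filter (fun v => v.1 = v.2.2), invMonomial n x y z v
      = ∑ v ∈ simplex2 n, ((v.1 : ZMod n) ^ (x + z) * (v.2 : ZMod n) ^ y)⁻¹ := by
    refine sum_nbij' (fun v => (v.1, v.2.1)) (fun v => (v.1, v.2, v.1)) ?_ ?_ ?_
      (fun _ _ => rfl) ?_
    · rintro ⟨a, b, c⟩ hv
      simp only [cubeMidMax, simplex2, cube, mem_filter, mem_product, mem_Ioo] at hv ⊢
      omega
    · rintro ⟨a, b⟩ hv
      simp only [cubeMidMax, simplex2, cube, mem_filter, mem_product, mem_Ioo, and_true] at hv ⊢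
      omega
    · rintro ⟨a, b, c⟩ hv
      obtain ⟨-, rfl : a = c⟩ := mem_filter.1 hv
      rfl
    · rintro ⟨a, b, c⟩ hv
      obtain ⟨-, rfl : a = c⟩ := mem_filter.1 hv
      dsimp only [invMonomial]
      rw [pow_add]
      congr 1
      ring
  have gt : ∑ v ∈ (cubeMidMax n).filter (fun v => v.2.2 < v.1), invMonomial n x y z v
      = ∑ v ∈ simplex n, invMonomial n z x y v := by
    refine sum_nbij' (fun v => (v.2.2, v.1, v.2.1)) (fun v => (v.2.1, v.2.2, v.1)) ?_ ?_
      (fun _ _ => rfl) (fun _ _ => rfl) fun v _ => by dsimp only [invMonomial]; congr 1; ring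
    all_goals
      intro v hv
      simp only [cubeMidMax, simplex, cube, mem_filter, mem_product, mem_Ioo] at hv ⊢
      omega
  rw [lt, eq, gt]

theorem sum_cubeMidMin :
    ∑ v ∈ cubeMidMin n, invMonomial n x y z v
      = ∑ v ∈ simplex n, invMonomial n y x z v
        + ∑ v ∈ simplex2 n, ((v.1 : ZMod n) ^ y * (v.2 : ZMod n) ^ (x + z))⁻¹
        + ∑ v ∈ simplex n, invMonomial n y z x v := by
  rw [sum_eq_sum_lt_add_sum_eq_add_sum_gt _ _ Prod.fst (fun v => v.2.2)]
  have lt : ∑ v ∈ (cubeMidMin n).filter (fun v => v.1 < v.2.2), invMonomial n x y z v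
      = ∑ v ∈ simplex n, invMonomial n y x z v := by
    refine sum_nbij' (fun v => (v.2.1, v.1, v.2.2)) (fun v => (v.2.1, v.1, v.2.2)) ?_ ?_
      (fun _ _ => rfl) (fun _ _ => rfl) fun v _ => by dsimp only [invMonomial]; congr 1; ring
    all_goals
      intro v hv
      simp only [cubeMidMin, simplex, cube, mem_filter, mem_product, mem_Ioo] at hv ⊢
      omega
  have eq : ∑ v ∈ (cubeMidMin n).filter (fun v => v.1 = v.2.2), invMonomial n x y z v
      = ∑ v ∈ simplex2 n, ((v.1 : ZMod n) ^ y * (v.2 : ZMod n) ^ (x + z))⁻¹ := by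
    refine sum_nbij' (fun v => (v.2.1, v.1)) (fun v => (v.2, v.1, v.2)) ?_ ?_ ?_
      (fun _ _ => rfl) ?_
    · rintro ⟨a, b, c⟩ hv
      simp only [cubeMidMin, simplex2, cube, mem_filter, mem_product, mem_Ioo] at hv ⊢
      omega
    · rintro ⟨a, b⟩ hv
      simp only [cubeMidMin, simplex2, cube, mem_filter, mem_product, mem_Ioo, and_true] at hv ⊢
      omega
    · rintro ⟨a, b, c⟩ hv
      obtain ⟨-, rfl : a = c⟩ := mem_filter.1 hv
      rfl
    · rintro ⟨a, b, c⟩ hv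
      obtain ⟨-, rfl : a = c⟩ := mem_filter.1 hv
      dsimp only [invMonomial]
      rw [pow_add]
      congr 1
      ring
  have gt : ∑ v ∈ (cubeMidMin n).filter (fun v => v.2.2 < v.1), invMonomial n x y z v
      = ∑ v ∈ simplex n, invMonomial n y z x v := by
    refine sum_nbij' (fun v => (v.2.1, v.2.2, v.1)) (fun v => (v.2.2, v.1, v.2.1)) ?_ ?_
      (fun _ _ => rfl) (fun _ _ => rfl) fun v _ => by dsimp only [invMonomial]; congr 1; ring
    all_goals
      intro v hv
      simp only [cubeMidMin, simplex, cube, mem_filter, mem_product, mem_Ioo] at hv ⊢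
      omega
  rw [lt, eq, gt]

theorem mem_pf_three {l : Fin 3 → ℕ} :
    l ∈ pf 3 n ↔ (0 < l 0 ∧ l 0 < n) ∧ (0 < l 1 ∧ l 1 < n) ∧ (0 < l 2 ∧ l 2 < n) := by
  simp [pf, Fin.forall_iff_succ]

theorem mem_pf_two {l : Fin 2 → ℕ} :
    l ∈ pf 2 n ↔ (0 < l 0 ∧ l 0 < n) ∧ (0 < l 1 ∧ l 1 < n) := by
  simp [pf, Fin.forall_fin_two]

theorem sum_partialSums_of_lt :
    ∑ l ∈ (pf 3 n).filter
        (fun l => (n < l 0 + l 1 + l 2 ∧ l 0 + l 1 + l 2 < 2 * n) ∧ l 0 + l 1 < n),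
      invMonomial n x y z (l 0, l 0 + l 1, l 0 + l 1 + l 2)
      = ∑ v ∈ cubeMidMax n, invMonomial n x y z v := by
  refine sum_nbij' (fun l => (l 0, l 0 + l 1, l 0 + l 1 + l 2 - n))
    (fun v => ![v.1, v.2.1 - v.1, v.2.2 + n - v.2.1]) ?_ ?_ ?_ ?_ ?_
  · intro l hl
    simp only [mem_filter, mem_pf_three] at hl
    simp only [cubeMidMax, cube, mem_filter, mem_product, mem_Ioo]
    omega
  · rintro ⟨a, b, c⟩ hv
    simp only [cubeMidMax, cube, mem_filter, mem_product, mem_Ioo] at hv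
    simp only [mem_filter, mem_pf_three, Fin.isValue, Matrix.cons_val_zero, Matrix.cons_val_one,
      Matrix.cons_val]
    omega
  · intro l hl
    simp only [mem_filter, mem_pf_three] at hl
    funext i
    fin_cases i <;> simp only [Fin.zero_eta, Fin.mk_one, Fin.reduceFinMk, Fin.isValue,
      Matrix.cons_val_zero, Matrix.cons_val_one, Matrix.cons_val] <;> omega
  · rintro ⟨a, b, c⟩ hv
    simp only [cubeMidMax, cube, mem_filter, mem_product, mem_Ioo] at hv
    simp only [Fin.isValue, Matrix.cons_val_zero, Matrix.cons_val_one, Matrix.cons_val,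
      Prod.mk.injEq, true_and]
    omega
  · intro l hl
    simp only [mem_filter] at hl
    simp only [invMonomial, natCast_sub_modulus (by omega : n ≤ l 0 + l 1 + l 2)]

theorem sum_partialSums_of_eq (hy : 0 < y) :
    ∑ l ∈ (pf 3 n).filter
        (fun l => (n < l 0 + l 1 + l 2 ∧ l 0 + l 1 + l 2 < 2 * n) ∧ l 0 + l 1 = n),
      invMonomial n x y z (l 0, l 0 + l 1, l 0 + l 1 + l 2) = 0 := by
  refine sum_eq_zero fun l hl => ?_
  simp only [invMonomial, (mem_filter.1 hl).2.2, ZMod.natCast_self, zero_pow hy.ne', mul_zero,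
    zero_mul, ZMod.inv_zero]

theorem sum_partialSums_of_gt :
    ∑ l ∈ (pf 3 n).filter
        (fun l => (n < l 0 + l 1 + l 2 ∧ l 0 + l 1 + l 2 < 2 * n) ∧ n < l 0 + l 1),
      invMonomial n x y z (l 0, l 0 + l 1, l 0 + l 1 + l 2)
      = ∑ v ∈ cubeMidMin n, invMonomial n x y z v := by
  refine sum_nbij' (fun l => (l 0, l 0 + l 1 - n, l 0 + l 1 + l 2 - n))
    (fun v => ![v.1, v.2.1 + n - v.1, v.2.2 - v.2.1]) ?_ ?_ ?_ ?_ ?_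
  · intro l hl
    simp only [mem_filter, mem_pf_three] at hl
    simp only [cubeMidMin, cube, mem_filter, mem_product, mem_Ioo]
    omega
  · rintro ⟨a, b, c⟩ hv
    simp only [cubeMidMin, cube, mem_filter, mem_product, mem_Ioo] at hv
    simp only [mem_filter, mem_pf_three, Fin.isValue, Matrix.cons_val_zero, Matrix.cons_val_one,
      Matrix.cons_val]
    omega
  · intro l hl
    simp only [mem_filter, mem_pf_three] at hl
    funext i
    fin_cases i <;> simp only [Fin.zero_eta, Fin.mk_one, Fin.reduceFinMk, Fin.isValue,
      Matrix.cons_val_zero, Matrix.cons_val_one, Matrix.cons_val] <;> omega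
  · rintro ⟨a, b, c⟩ hv
    simp only [cubeMidMin, cube, mem_filter, mem_product, mem_Ioo] at hv
    simp only [Fin.isValue, Matrix.cons_val_zero, Matrix.cons_val_one, Matrix.cons_val,
      Prod.mk.injEq, true_and]
    omega
  · intro l hl
    simp only [mem_filter] at hl
    simp only [invMonomial, natCast_sub_modulus (by omega : n ≤ l 0 + l 1),
      natCast_sub_modulus (by omega : n ≤ l 0 + l 1 + l 2)]

end Reindexing

theorem inv_den_three (p : PP) (x y z : ℕ) (l : Fin 3 → ℕ) :
    (den p [x, y, z] l)⁻¹ = invMonomial p x y z (l 0, l 0 + l 1, l 0 + l 1 + l 2) := by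
  have h0 : Iic (0 : Fin 3) = {0} := rfl
  have h1 : Iic (1 : Fin 3) = {0, 1} := rfl
  have h2 : Iic (2 : Fin 3) = univ := rfl
  change (∏ i : Fin 3, ((psum l i : ℕ) : ZMod p) ^ [x, y, z].get i)⁻¹ = _
  simp only [Fin.prod_univ_three, psum, h0, h1, h2, sum_singleton,
    sum_pair (by decide : (0 : Fin 3) ≠ 1), Fin.sum_univ_three]
  rfl

theorem inv_den_two (p : PP) (x y : ℕ) (l : Fin 2 → ℕ) :
    (den p [x, y] l)⁻¹ = ((l 0 : ZMod p) ^ x * ((l 0 + l 1 : ℕ) : ZMod p) ^ y)⁻¹ := by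
  have h0 : Iic (0 : Fin 2) = {0} := rfl
  have h1 : Iic (1 : Fin 2) = univ := rfl
  change (∏ i : Fin 2, ((psum l i : ℕ) : ZMod p) ^ [x, y].get i)⁻¹ = _
  simp only [Fin.prod_univ_two, psum, h0, h1, sum_singleton, Fin.sum_univ_two]
  rfl

theorem zetaA_three_eq_sum_simplex (x y z : ℕ) :
    zetaA [x, y, z] = Amk fun p => ∑ v ∈ simplex p, invMonomial p x y z v := by
  refine congrArg Amk (funext fun p => ?_)
  change ∑ l ∈ (pf 3 p).filter (fun l => ∑ i, l i < (p : ℕ)), (den p [x, y, z] l)⁻¹ = _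
  refine sum_nbij' (fun l => (l 0, l 0 + l 1, l 0 + l 1 + l 2))
    (fun v => ![v.1, v.2.1 - v.1, v.2.2 - v.2.1]) ?_ ?_ ?_ ?_ fun l _ => inv_den_three p x y z l
  · intro l hl
    simp only [mem_filter, mem_pf_three, Fin.sum_univ_three] at hl
    simp only [simplex, cube, mem_filter, mem_product, mem_Ioo]
    omega
  · rintro ⟨a, b, c⟩ hv
    simp only [simplex, cube, mem_filter, mem_product, mem_Ioo] at hv
    simp only [mem_filter, mem_pf_three, Fin.sum_univ_three, Fin.isValue, Matrix.cons_val_zero,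
      Matrix.cons_val_one, Matrix.cons_val]
    omega
  · exact fun l _ => funext fun i => by fin_cases i <;> simp
  · rintro ⟨a, b, c⟩ hv
    simp only [simplex, cube, mem_filter, mem_product, mem_Ioo] at hv
    simp only [Fin.isValue, Matrix.cons_val_zero, Matrix.cons_val_one, Matrix.cons_val,
      Prod.mk.injEq, true_and]
    omega

theorem zetaA_two_eq_sum_simplex2 (x y : ℕ) :
    zetaA [x, y] = Amk fun p => ∑ v ∈ simplex2 p, ((v.1 : ZMod p) ^ x * (v.2 : ZMod p) ^ y)⁻¹ := by
  refine congrArg Amk (funext fun p => ?_)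
  change ∑ l ∈ (pf 2 p).filter (fun l => ∑ i, l i < (p : ℕ)), (den p [x, y] l)⁻¹ = _
  refine sum_nbij' (fun l => (l 0, l 0 + l 1)) (fun v => ![v.1, v.2 - v.1]) ?_ ?_ ?_ ?_
    fun l _ => inv_den_two p x y l
  · intro l hl
    simp only [mem_filter, mem_pf_two, Fin.sum_univ_two] at hl
    simp only [simplex2, mem_filter, mem_product, mem_Ioo]
    omega
  · rintro ⟨a, b⟩ hv
    simp only [simplex2, mem_filter, mem_product, mem_Ioo] at hv
    simp only [mem_filter, mem_pf_two, Fin.sum_univ_two, Fin.isValue, Matrix.cons_val_zero,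
      Matrix.cons_val_one, Matrix.cons_val_fin_one]
    omega
  · exact fun l _ => funext fun i => by fin_cases i <;> simp
  · rintro ⟨a, b⟩ hv
    simp only [simplex2, mem_filter, mem_product, mem_Ioo] at hv
    simp only [Fin.isValue, Matrix.cons_val_zero, Matrix.cons_val_one, Matrix.cons_val_fin_one,
      Prod.mk.injEq, true_and]
    omega

theorem zetaAi_two_three_eq_sum_cubeMidMax_add (x y z : ℕ) (hy : 0 < y) :
    zetaAi 2 [x, y, z] = Amk fun p =>
      ∑ v ∈ cubeMidMax p, invMonomial p x y z v + ∑ v ∈ cubeMidMin p, invMonomial p x y z v := by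
  refine congrArg Amk (funext fun p => ?_)
  change ∑ l ∈ (pf 3 p).filter (fun l => (2 - 1) * (p : ℕ) < ∑ j, l j ∧ ∑ j, l j < 2 * (p : ℕ)),
    (den p [x, y, z] l)⁻¹ = _
  simp only [inv_den_three, Fin.sum_univ_three, Nat.add_one_sub_one, one_mul]
  rw [sum_eq_sum_lt_add_sum_eq_add_sum_gt _ _ (fun l => l 0 + l 1) (fun _ => (p : ℕ)),
    filter_filter, filter_filter, filter_filter, sum_partialSums_of_lt,
    sum_partialSums_of_eq _ _ _ _ hy, sum_partialSums_of_gt, add_zero]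

theorem zetaAi_two_depth_three_general (k1 k2 k3 : ℕ) (h2 : 0 < k2) :
    zetaAi 2 [k1, k2, k3]
      = zetaA [k3, k1, k2] + zetaA [k1, k3, k2] + zetaA [k2, k3, k1] + zetaA [k2, k1, k3]
        + zetaA [k1 + k3, k2] + zetaA [k2, k1 + k3] := by
  simp only [zetaAi_two_three_eq_sum_cubeMidMax_add k1 k2 k3 h2, sum_cubeMidMax, sum_cubeMidMin,
    zetaA_three_eq_sum_simplex, zetaA_two_eq_sum_simplex2, ← map_add]
  congr 1
  funext p
  simp only [Pi.add_apply]
  abel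

/-- ζ^{(2)}_𝒜(k₁,k₂,k₃) expressed as a sum of FMZVs. -/
theorem zetaAi_two_depth_three (k1 k2 k3 : ℕ) (h1 : 0 < k1) (h2 : 0 < k2) (h3 : 0 < k3) :
    zetaAi 2 [k1, k2, k3]
      = zetaA [k3, k1, k2] + zetaA [k1, k3, k2] + zetaA [k2, k3, k1] + zetaA [k2, k1, k3]
        + zetaA [k1 + k3, k2] + zetaA [k2, k1 + k3] :=
  zetaAi_two_depth_three_general k1 k2 k3 h2

end FMP
end
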